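/- Let A ∈ ℝ^{m×m×n} be (1,2)-symmetric and suppose the best rank-(r₁,r₁,r₃) approximation problem min ‖A − (X,Y,Z)·S‖ over X,Y ∈ ℝ^{m×r₁}, Z ∈ ℝ^{n×r₃} with orthonormal columns (with unconstrained core S) has a unique solution (U,V,W) up to Grassmann equivalence. Then representatives can be chosen with U = V, and the corresponding core F = A·(U,U,W) is (1,2)-symmetric, i.e. every 3-slice F(:,:,k) is a symmetric r₁×r₁ matrix. -/

import Mathlib

open scoped BigOperators
open Sum

noncomputable section

/-- Multilinear (Tucker) tensor–matrix product: `(U,V,W)·A`. -/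
def tmul {ι₁ ι₂ ι₃ κ₁ κ₂ κ₃ : Type*} [Fintype ι₁] [Fintype ι₂] [Fintype ι₃]
    (U : κ₁ → ι₁ → ℝ) (V : κ₂ → ι₂ → ℝ) (W : κ₃ → ι₃ → ℝ)
    (A : ι₁ → ι₂ → ι₃ → ℝ) : κ₁ → κ₂ → κ₃ → ℝ :=
  fun i j k => ∑ a, ∑ b, ∑ c, U i a * V j b * W k c * A a b c

/-- Squared Frobenius norm of a 3-tensor. -/
def fro2 {ι₁ ι₂ ι₃ : Type*} [Fintype ι₁] [Fintype ι₂] [Fintype ι₃]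
    (A : ι₁ → ι₂ → ι₃ → ℝ) : ℝ := ∑ i, ∑ j, ∑ k, (A i j k) ^ 2

/-- Frobenius norm of a 3-tensor. -/
def fro {ι₁ ι₂ ι₃ : Type*} [Fintype ι₁] [Fintype ι₂] [Fintype ι₃]
    (A : ι₁ → ι₂ → ι₃ → ℝ) : ℝ := Real.sqrt (fro2 A)

/-- Trilinear form `A·(x,y,z)`. -/
def tri {ι₁ ι₂ ι₃ : Type*} [Fintype ι₁] [Fintype ι₂] [Fintype ι₃]
    (A : ι₁ → ι₂ → ι₃ → ℝ) (x : ι₁ → ℝ) (y : ι₂ → ℝ) (z : ι₃ → ℝ) : ℝ :=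
  ∑ i, ∑ j, ∑ k, A i j k * x i * y j * z k

/-- Unit vector (Euclidean norm 1). -/
def unitVec {ι : Type*} [Fintype ι] (x : ι → ℝ) : Prop := ∑ i, x i ^ 2 = 1

/-- A matrix (given as a family of rows) has orthonormal columns. -/
def orthCols {ι κ : Type*} [Fintype ι] [DecidableEq κ] (X : ι → κ → ℝ) : Prop :=
  ∀ a b, (∑ i, X i a * X i b) = if a = b then (1 : ℝ) else 0

/-! Transposing the first two core indices and swapping the first two factors of the solution
`(U,V,W,S)` gives, since `A` is (1,2)-symmetric, a competitor with the same residual; by uniqueness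
the approximation `B = (U,V,W)·S` is then also `(V,U,W)·Sᵀ`. The two decompositions show that the
projector `U Uᵀ` fixes `B` in mode 1 and in mode 2, so `B = (U,U,W)·C` for `C = B·(U,U,W)`. The
least-squares core `A·(U,U,W)` does at least as well as `C`, hence is optimal, and uniqueness
identifies its approximation with `B`. -/

open Matrix

section Tucker

variable {α β γ α' β' γ' ι₁ ι₂ ι₃ : Type*}

theorem sum_comm_triple {M : Type*} [AddCommMonoid M] [Fintype α] [Fintype β] [Fintype γ]
    [Fintype α'] [Fintype β'] [Fintype γ'] (f : α → β → γ → α' → β' → γ' → M) :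
    ∑ a, ∑ b, ∑ c, ∑ p, ∑ q, ∑ r, f a b c p q r
      = ∑ p, ∑ q, ∑ r, ∑ a, ∑ b, ∑ c, f a b c p q r := by
  calc ∑ a, ∑ b, ∑ c, ∑ p, ∑ q, ∑ r, f a b c p q r
      = ∑ x : α × β × γ, ∑ y : α' × β' × γ', f x.1 x.2.1 x.2.2 y.1 y.2.1 y.2.2 := by
        simp only [Fintype.sum_prod_type]
    _ = ∑ y : α' × β' × γ', ∑ x : α × β × γ, f x.1 x.2.1 x.2.2 y.1 y.2.1 y.2.2 :=
        Finset.sum_comm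
    _ = ∑ p, ∑ q, ∑ r, ∑ a, ∑ b, ∑ c, f a b c p q r := by
        simp only [Fintype.sum_prod_type]

variable [Fintype ι₁] [Fintype ι₂] [Fintype ι₃]

theorem tmul_tmul [Fintype α] [Fintype β] [Fintype γ]
    (X : Matrix α' α ℝ) (Y : Matrix β' β ℝ) (Z : Matrix γ' γ ℝ)
    (X' : Matrix α ι₁ ℝ) (Y' : Matrix β ι₂ ℝ) (Z' : Matrix γ ι₃ ℝ)
    (B : ι₁ → ι₂ → ι₃ → ℝ) :
    tmul X Y Z (tmul X' Y' Z' B) = tmul (X * X') (Y * Y') (Z * Z') B := by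
  funext i j k
  simp only [tmul, mul_apply, Finset.mul_sum, Finset.sum_mul]
  rw [sum_comm_triple]
  refine Finset.sum_congr rfl fun p _ => Finset.sum_congr rfl fun q _ =>
    Finset.sum_congr rfl fun r _ => ?_
  rw [Finset.sum_comm_cycle]
  exact Finset.sum_congr rfl fun c _ => Finset.sum_comm.trans <| Finset.sum_congr rfl
    fun b _ => Finset.sum_congr rfl fun a _ => by ring

theorem tmul_one [DecidableEq ι₁] [DecidableEq ι₂] [DecidableEq ι₃]
    (B : ι₁ → ι₂ → ι₃ → ℝ) :
    tmul (1 : Matrix ι₁ ι₁ ℝ) (1 : Matrix ι₂ ι₂ ℝ) (1 : Matrix ι₃ ι₃ ℝ) B = B := by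
  funext i j k
  simp [tmul, one_apply]

theorem tmul_sub (X : Matrix α ι₁ ℝ) (Y : Matrix β ι₂ ℝ) (Z : Matrix γ ι₃ ℝ)
    (P Q : ι₁ → ι₂ → ι₃ → ℝ) : tmul X Y Z (P - Q) = tmul X Y Z P - tmul X Y Z Q := by
  funext i j k
  simp only [tmul, Pi.sub_apply, mul_sub, Finset.sum_sub_distrib]

theorem tmul_swap (X : Matrix α ι₁ ℝ) (Y : Matrix β ι₂ ℝ) (Z : Matrix γ ι₃ ℝ)
    (S : ι₁ → ι₂ → ι₃ → ℝ) (i : β) (j : α) (k : γ) :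
    tmul Y X Z (fun a b c => S b a c) i j k = tmul X Y Z S j i k := by
  simp only [tmul]
  rw [Finset.sum_comm]
  exact Finset.sum_congr rfl fun a _ => Finset.sum_congr rfl fun b _ =>
    Finset.sum_congr rfl fun c _ => by ring

theorem tmul_eq_self_of_mul_eq [Fintype α] [Fintype β] [Fintype γ]
    {X : Matrix α ι₁ ℝ} {Y : Matrix β ι₂ ℝ} {Z : Matrix γ ι₃ ℝ}
    {P : Matrix α α ℝ} {Q : Matrix β β ℝ} {R : Matrix γ γ ℝ}
    (hP : P * X = X) (hQ : Q * Y = Y) (hR : R * Z = Z) (S : ι₁ → ι₂ → ι₃ → ℝ) :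
    tmul P Q R (tmul X Y Z S) = tmul X Y Z S := by
  rw [tmul_tmul, hP, hQ, hR]

theorem tri_eq_tmul_transpose {κ₁ κ₂ κ₃ : Type*} (A : ι₁ → ι₂ → ι₃ → ℝ)
    (X : Matrix ι₁ κ₁ ℝ) (Y : Matrix ι₂ κ₂ ℝ) (Z : Matrix ι₃ κ₃ ℝ) :
    (fun a b c => tri A (fun i => X i a) (fun j => Y j b) (fun k => Z k c))
      = tmul Xᵀ Yᵀ Zᵀ A := by
  funext a b c
  exact Finset.sum_congr rfl fun i _ => Finset.sum_congr rfl fun j _ =>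
    Finset.sum_congr rfl fun k _ => by simp only [transpose_apply]; ring

theorem tri_comm_of_symm {A : ι₁ → ι₁ → ι₃ → ℝ} (hA : ∀ i j k, A i j k = A j i k)
    (x y : ι₁ → ℝ) (z : ι₃ → ℝ) : tri A x y z = tri A y x z := by
  simp only [tri]
  rw [Finset.sum_comm]
  exact Finset.sum_congr rfl fun i _ => Finset.sum_congr rfl fun j _ =>
    Finset.sum_congr rfl fun k _ => by rw [hA]; ring

end Tucker

section Frobenius

variable {α β γ : Type*} [Fintype α] [Fintype β] [Fintype γ]

def frobInner (P Q : α → β → γ → ℝ) : ℝ := ∑ i, ∑ j, ∑ k, P i j k * Q i j k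

theorem fro2_nonneg (P : α → β → γ → ℝ) : 0 ≤ fro2 P := by
  unfold fro2
  positivity

theorem fro2_swap (P : α → β → γ → ℝ) : fro2 (fun j i k => P i j k) = fro2 P :=
  Finset.sum_comm

theorem fro2_sub (P Q : α → β → γ → ℝ) :
    fro2 (P - Q) = fro2 P - 2 * frobInner P Q + fro2 Q := by
  simp only [fro2, frobInner, Pi.sub_apply, sub_sq, Finset.sum_add_distrib,
    Finset.sum_sub_distrib, Finset.mul_sum, mul_assoc]

theorem frobInner_tmul {α' β' γ' : Type*} [Fintype α'] [Fintype β'] [Fintype γ']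
    (X : Matrix α α' ℝ) (Y : Matrix β β' ℝ) (Z : Matrix γ γ' ℝ)
    (P : α → β → γ → ℝ) (G : α' → β' → γ' → ℝ) :
    frobInner P (tmul X Y Z G) = frobInner (tmul Xᵀ Yᵀ Zᵀ P) G := by
  simp only [frobInner, tmul, transpose_apply, Finset.mul_sum, Finset.sum_mul]
  rw [sum_comm_triple]
  exact Finset.sum_congr rfl fun a _ => Finset.sum_congr rfl fun b _ =>
    Finset.sum_congr rfl fun c _ => Finset.sum_congr rfl fun i _ =>
    Finset.sum_congr rfl fun j _ => Finset.sum_congr rfl fun k _ => by ring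

end Frobenius

theorem orthCols_iff_transpose_mul_self {ι κ : Type*} [Fintype ι] [DecidableEq κ]
    {X : Matrix ι κ ℝ} :
    orthCols X ↔ Xᵀ * X = 1 := by
  simp only [orthCols, ← ext_iff, mul_apply, transpose_apply, one_apply]

theorem mul_transpose_mul_of_orthCols {ι κ : Type*} [Fintype ι] [Fintype κ] [DecidableEq κ]
    {X : Matrix ι κ ℝ} (hX : orthCols X) : X * Xᵀ * X = X := by
  rw [Matrix.mul_assoc, orthCols_iff_transpose_mul_self.1 hX, Matrix.mul_one]

section Approximation

variable {ι₁ ι₂ ι₃ κ₁ κ₂ κ₃ : Type*} [Fintype ι₁] [Fintype ι₂] [Fintype ι₃]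
  [Fintype κ₁] [Fintype κ₂] [Fintype κ₃]

theorem fro2_sub_tmul_tmul_transpose_le [DecidableEq κ₁] [DecidableEq κ₂] [DecidableEq κ₃]
    {X : Matrix ι₁ κ₁ ℝ} {Y : Matrix ι₂ κ₂ ℝ} {Z : Matrix ι₃ κ₃ ℝ}
    (hX : orthCols X) (hY : orthCols Y) (hZ : orthCols Z)
    (A : ι₁ → ι₂ → ι₃ → ℝ) (T : κ₁ → κ₂ → κ₃ → ℝ) :
    fro2 (A - tmul X Y Z (tmul Xᵀ Yᵀ Zᵀ A)) ≤ fro2 (A - tmul X Y Z T) := by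
  set F := tmul Xᵀ Yᵀ Zᵀ A
  have hcore : tmul Xᵀ Yᵀ Zᵀ (tmul X Y Z F) = F := by
    rw [tmul_tmul, orthCols_iff_transpose_mul_self.1 hX, orthCols_iff_transpose_mul_self.1 hY,
      orthCols_iff_transpose_mul_self.1 hZ, tmul_one]
  have hperp : frobInner (A - tmul X Y Z F) (tmul X Y Z (T - F)) = 0 := by
    rw [frobInner_tmul, tmul_sub, hcore, sub_self]
    simp [frobInner]
  have hsplit : A - tmul X Y Z T = (A - tmul X Y Z F) - tmul X Y Z (T - F) := by
    rw [tmul_sub]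
    abel
  rw [hsplit, fro2_sub (A - tmul X Y Z F), hperp]
  linarith [fro2_nonneg (tmul X Y Z (T - F))]

theorem tmul_tmul_transpose_eq_self_of_swap [DecidableEq κ₁] [DecidableEq κ₃]
    {U : Matrix ι₁ κ₁ ℝ} {V : Matrix ι₁ κ₂ ℝ} {W : Matrix ι₃ κ₃ ℝ}
    (hU : orthCols U) (hW : orthCols W) {S : κ₁ → κ₂ → κ₃ → ℝ}
    {S' : κ₂ → κ₁ → κ₃ → ℝ} {B : ι₁ → ι₁ → ι₃ → ℝ}
    (hB : tmul U V W S = B) (hB' : tmul V U W S' = B) :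
    tmul U U W (tmul Uᵀ Uᵀ Wᵀ B) = B := by
  classical
  have hPU := mul_transpose_mul_of_orthCols hU
  have hPW := mul_transpose_mul_of_orthCols hW
  have hmode₁₃ : tmul (U * Uᵀ) (1 : Matrix ι₁ ι₁ ℝ) (W * Wᵀ) B = B := by
    rw [← hB]
    exact tmul_eq_self_of_mul_eq hPU (Matrix.one_mul V) hPW S
  have hmode₂ : tmul (1 : Matrix ι₁ ι₁ ℝ) (U * Uᵀ) (1 : Matrix ι₃ ι₃ ℝ) B = B := by
    rw [← hB']
    exact tmul_eq_self_of_mul_eq (Matrix.one_mul V) hPU (Matrix.one_mul W) S'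
  calc tmul U U W (tmul Uᵀ Uᵀ Wᵀ B)
      = tmul (U * Uᵀ) (1 : Matrix ι₁ ι₁ ℝ) (W * Wᵀ)
          (tmul (1 : Matrix ι₁ ι₁ ℝ) (U * Uᵀ) (1 : Matrix ι₃ ι₃ ℝ) B) := by
        rw [tmul_tmul, tmul_tmul, Matrix.mul_one, Matrix.one_mul, Matrix.mul_one]
    _ = B := by rw [hmode₂, hmode₁₃]

theorem fro2_sub_tmul_swap {A : ι₁ → ι₁ → ι₃ → ℝ} (hA : ∀ i j k, A i j k = A j i k)
    (X : Matrix ι₁ κ₁ ℝ) (Y : Matrix ι₁ κ₂ ℝ) (Z : Matrix ι₃ κ₃ ℝ) (S : κ₁ → κ₂ → κ₃ → ℝ) :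
    fro2 (fun i j k => A i j k - tmul Y X Z (fun a b c => S b a c) i j k)
      = fro2 (fun i j k => A i j k - tmul X Y Z S i j k) := by
  rw [← fro2_swap (fun i j k => A i j k - tmul X Y Z S i j k)]
  congr
  funext i j k
  rw [tmul_swap, hA]

end Approximation

/-- if a (1,2)-symmetric tensor has a unique best rank-(r₁,r₁,r₃)
approximation, then representatives can be chosen with `U = V`, and the core
`F = A·(U,U,W)` is (1,2)-symmetric. -/
theorem stmt_17 {m n r₁ r₃ : ℕ}
    (A : Fin m → Fin m → Fin n → ℝ) (hsym : ∀ i j k, A i j k = A j i k)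
    (U V : Fin m → Fin r₁ → ℝ) (W : Fin n → Fin r₃ → ℝ)
    (S : Fin r₁ → Fin r₁ → Fin r₃ → ℝ)
    (hU : orthCols U) (hV : orthCols V) (hW : orthCols W)
    (hmin : ∀ (X Y : Fin m → Fin r₁ → ℝ) (Z : Fin n → Fin r₃ → ℝ)
      (S' : Fin r₁ → Fin r₁ → Fin r₃ → ℝ),
      orthCols X → orthCols Y → orthCols Z →
      fro2 (fun i j k => A i j k - tmul U V W S i j k)
        ≤ fro2 (fun i j k => A i j k - tmul X Y Z S' i j k))
    (huniq : ∀ (X Y : Fin m → Fin r₁ → ℝ) (Z : Fin n → Fin r₃ → ℝ)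
      (S' : Fin r₁ → Fin r₁ → Fin r₃ → ℝ),
      orthCols X → orthCols Y → orthCols Z →
      fro2 (fun i j k => A i j k - tmul X Y Z S' i j k)
        = fro2 (fun i j k => A i j k - tmul U V W S i j k)
      → tmul X Y Z S' = tmul U V W S) :
    ∃ (U' : Fin m → Fin r₁ → ℝ) (W' : Fin n → Fin r₃ → ℝ),
      orthCols U' ∧ orthCols W' ∧
      tmul U' U' W' (fun a b c =>
          tri A (fun i => U' i a) (fun j => U' j b) (fun k => W' k c))
        = tmul U V W S ∧
      (∀ a b c, tri A (fun i => U' i a) (fun j => U' j b) (fun k => W' k c)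
        = tri A (fun i => U' i b) (fun j => U' j a) (fun k => W' k c)) := by
  have hswap : tmul V U W (fun a b c => S b a c) = tmul U V W S :=
    huniq V U W _ hV hU hW (fro2_sub_tmul_swap hsym U V W S)
  have hproj := tmul_tmul_transpose_eq_self_of_swap hU hW rfl hswap
  have hle : fro2 (fun i j k => A i j k - tmul U U W (fun a b c =>
        tri A (fun i => U i a) (fun j => U j b) (fun k => W k c)) i j k)
      ≤ fro2 (fun i j k => A i j k - tmul U V W S i j k) := by
    have := fro2_sub_tmul_tmul_transpose_le hU hU hW A (tmul Uᵀ Uᵀ Wᵀ (tmul U V W S))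
    rw [hproj] at this
    rwa [tri_eq_tmul_transpose A U U W]
  exact ⟨U, W, hU, hW, huniq U U W _ hU hU hW (le_antisymm hle (hmin U U W _ hU hU hW)),
    fun a b c => tri_comm_of_symm hsym _ _ _⟩
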